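/- Let B : {0,1}^m → (subsets of K of size ≤ 1) be a (T, δ)-mystery bin function with keyspace K. For an integer c ≥ 1, define B_c : {0,1}^{cm} → (subsets of K of size ≤ 1) by partitioning the input y' into m consecutive blocks of c bits, letting z_i be the parity (sum mod 2) of the i-th block, and setting B_c(y') = B(z_1, ..., z_m). Then B_c is a (cT, δ)-mystery bin function with the same keyspace K. -/

import Mathlib

/-- A deterministic adaptive decision tree over inputs `x : Fin n → Bool`
with outputs in `β`. -/
inductive DTree (n : ℕ) (β : Type) : Type where
  | leaf : β → DTree n β
  | node : Fin n → DTree n β → DTree n β → DTree n β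

namespace DTree

/-- Evaluate a decision tree on an input. -/
def eval {n : ℕ} {β : Type} : DTree n β → (Fin n → Bool) → β
  | .leaf b, _ => b
  | .node i t0 t1, x => if x i then eval t1 x else eval t0 x

/-- Depth of a decision tree: the maximum number of queries on a root-to-leaf path. -/
def depth {n : ℕ} {β : Type} : DTree n β → ℕ
  | .leaf _ => 0
  | .node _ t0 t1 => 1 + max (depth t0) (depth t1)

end DTree

/-- `x` is consistent with a history of (queried index, answer) pairs. -/
def Consistent {n : ℕ} (x : Fin n → Bool) (h : List (Fin n × Bool)) : Prop :=
  ∀ p ∈ h, x p.1 = p.2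

/-- Run a query strategy (given as a decision tree) against an adversary strategy
`adv` (which fixes each queried bit as a function of the history so far), starting
from history `h`; returns the partial assignment produced by the run. -/
def runAdv {n : ℕ} {β : Type} (adv : List (Fin n × Bool) → Fin n → Bool) :
    DTree n β → List (Fin n × Bool) → List (Fin n × Bool)
  | .leaf _, h => h
  | .node i t0 t1, h =>
    if adv h i then runAdv adv t1 (h ++ [(i, true)])
    else runAdv adv t0 (h ++ [(i, false)])

/-- `secur(B, q) ≥ β`: there is an adversary strategy such that against any query
strategy making at most `q` queries, at least `β·|K|` keys `k` remain consistent
(with the bits fixed during the run) with the bin containing exactly `k`.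
A bin function maps `y ∈ {0,1}^m` to a subset of the keyspace `Fin M` of size at
most one, encoded as `Option (Fin M)`. -/
def HasSecurity {m M : ℕ} (B : (Fin m → Bool) → Option (Fin M)) (q : ℕ) (β : ℝ) :
    Prop :=
  ∃ adv : List (Fin m × Bool) → Fin m → Bool,
    ∀ T : DTree m Unit, T.depth ≤ q →
      ∃ H : Finset (Fin M), β * (M : ℝ) ≤ (H.card : ℝ) ∧
        ∀ k ∈ H, ∃ y : Fin m → Bool,
          Consistent y (runAdv adv T []) ∧ B y = some k

/-- `B` is a `(T, δ)`-mystery bin function: (i) some depth-`T` decision tree computes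
the bin contents `B(y)`; (ii) for each key `k`, some decision tree of depth `δT`
decides whether `k ∈ B(y)`; (iii) `secur(B, ⌊(1-δ)T⌋) ≥ 1 - δ`. -/
def IsMBF {m M : ℕ} (B : (Fin m → Bool) → Option (Fin M)) (T : ℕ) (δ : ℝ) : Prop :=
  (∃ tr : DTree m (Option (Fin M)), tr.depth ≤ T ∧ ∀ y, tr.eval y = B y) ∧
  (∀ k : Fin M, ∃ tr : DTree m Bool, (tr.depth : ℝ) ≤ δ * (T : ℝ) ∧
      ∀ y, tr.eval y = true ↔ B y = some k) ∧
  HasSecurity B ⌊(1 - δ) * (T : ℝ)⌋₊ (1 - δ)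

/-- The parity of the `i`-th block of `c` consecutive bits of `y : {0,1}^{cm}`
(block `i` consists of the positions `p` with `p / c = i`). -/
def blockParity (c m : ℕ) (y : Fin (c * m) → Bool) (i : Fin m) : Bool :=
  decide (Odd (Finset.univ.filter
    (fun p : Fin (c * m) => p.val / c = i.val ∧ y p = true)).card)

/-!
A decision tree for `B` becomes one for `B_c` by replacing the query of `z_i` with the `c` queries
of block `i`, which multiplies depths by `c`.

For security, the adversary for `B_c` answers `0` to each fresh bit, except to the last unqueried
bit of a block, which receives the answer the adversary for `B` gives to that block in a simulated
run; so a completed block has parity equal to that answer. Completing a block costs `c` queries,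
hence `q` queries simulate at most `q / c` queries of the inner run. An input `y` consistent with
the inner run lifts to an input consistent with the outer run whose block parities are `y`:
completed blocks already have parity `y_i`, and every other block has an unqueried bit, set to
`y_i`, while all its queried bits are `0`. Finally `⌊(1-δ)T⌋ = ⌊(1-δ)cT⌋ / c`.
-/

open Finset

namespace DTree

variable {n : ℕ} {β : Type}

def parityTree : List (Fin n) → DTree n β → DTree n β → DTree n β
  | [], t0, _ => t0
  | j :: l, t0, t1 => .node j (parityTree l t0 t1) (parityTree l t1 t0)

theorem eval_parityTree (x : Fin n → Bool) (l : List (Fin n)) (t0 t1 : DTree n β) :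
    (parityTree l t0 t1).eval x = if Odd (l.countP x) then t1.eval x else t0.eval x := by
  induction l generalizing t0 t1 with
  | nil => simp [parityTree]
  | cons j l ih =>
    cases hj : x j
    · simp [parityTree, eval, ih, hj]
    · simp only [parityTree, eval, ih, hj, List.countP_cons, if_true, Nat.odd_add_one, ite_not]

theorem depth_parityTree_le (l : List (Fin n)) (t0 t1 : DTree n β) :
    (parityTree l t0 t1).depth ≤ l.length + max t0.depth t1.depth := by
  induction l generalizing t0 t1 with
  | nil => simp [parityTree]
  | cons j l ih =>
    have := ih t0 t1
    have := ih t1 t0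
    simp only [parityTree, depth, List.length_cons]
    omega

def pathTree : List (Fin n) → DTree n Unit
  | [] => .leaf ()
  | i :: l => .node i (pathTree l) (pathTree l)

theorem depth_pathTree (l : List (Fin n)) : (pathTree l).depth = l.length := by
  induction l with
  | nil => rfl
  | cons i l ih => simp [pathTree, depth, ih, Nat.add_comm]

end DTree

section Runs

variable {n : ℕ} {β : Type} (adv : List (Fin n × Bool) → Fin n → Bool)

inductive IsRun : List (Fin n × Bool) → Prop
  | nil : IsRun []
  | snoc {h : List (Fin n × Bool)} (p : Fin n) : IsRun h → IsRun (h ++ [(p, adv h p)])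

theorem runAdv_node (i : Fin n) (t0 t1 : DTree n β) (h : List (Fin n × Bool)) :
    runAdv adv (.node i t0 t1) h = runAdv adv (if adv h i then t1 else t0) (h ++ [(i, adv h i)]) := by
  cases hi : adv h i <;> simp [runAdv, hi]

theorem length_runAdv_le (t : DTree n β) (h : List (Fin n × Bool)) :
    (runAdv adv t h).length ≤ h.length + t.depth := by
  induction t generalizing h with
  | leaf => simp [runAdv]
  | node i t0 t1 ih0 ih1 =>
    rw [runAdv_node, DTree.depth]
    split
    · exact (ih1 _).trans (by simp; omega)
    · exact (ih0 _).trans (by simp; omega)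

theorem runAdv_pathTree_append (l₁ l₂ : List (Fin n)) (h : List (Fin n × Bool)) :
    runAdv adv (DTree.pathTree (l₁ ++ l₂)) h =
      runAdv adv (DTree.pathTree l₂) (runAdv adv (DTree.pathTree l₁) h) := by
  induction l₁ generalizing h with
  | nil => rfl
  | cons i l ih => simp only [List.cons_append, DTree.pathTree, runAdv_node, ite_self, ih]

variable {adv}

theorem IsRun.runAdv {h : List (Fin n × Bool)} (hh : IsRun adv h) (t : DTree n β) :
    IsRun adv (_root_.runAdv adv t h) := by
  induction t generalizing h with
  | leaf => exact hh
  | node i t0 t1 ih0 ih1 =>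
    rw [runAdv_node]
    split
    · exact ih1 (hh.snoc i)
    · exact ih0 (hh.snoc i)

theorem IsRun.runAdv_pathTree {h : List (Fin n × Bool)} (hh : IsRun adv h) :
    _root_.runAdv adv (DTree.pathTree (h.map Prod.fst)) [] = h := by
  induction hh with
  | nil => rfl
  | snoc p _ ih =>
    simp [runAdv_pathTree_append, ih, DTree.pathTree, runAdv_node, _root_.runAdv]

end Runs

section Blocks

variable {c m : ℕ}

def blockOf (p : Fin (c * m)) : Fin m := ⟨p.val / c, Nat.div_lt_of_lt_mul p.isLt⟩

def block (c m : ℕ) (i : Fin m) : Finset (Fin (c * m)) := univ.filter (blockOf · = i)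

@[simp]
theorem mem_block {i : Fin m} {p : Fin (c * m)} : p ∈ block c m i ↔ blockOf p = i := by
  simp [block]

theorem card_block (hc : 0 < c) (i : Fin m) : #(block c m i) = c := by
  have hIco : (block c m i).map Fin.valEmbedding = Ico (i.val * c) (i.val * c + c) := by
    ext x
    simp only [mem_map, mem_block, blockOf, Fin.ext_iff, Fin.valEmbedding_apply, mem_Ico]
    constructor
    · rintro ⟨p, hp, rfl⟩
      have := (Nat.div_eq_iff hc).1 hp
      omega
    · rintro ⟨hlo, hhi⟩
      have hx : x < c * m := by nlinarith [i.isLt]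
      exact ⟨⟨x, hx⟩, show x / c = i.val from (Nat.div_eq_iff hc).2 (by omega), rfl⟩
  rw [← card_map, hIco, Nat.card_Ico, Nat.add_sub_cancel_left]

theorem blockParity_eq (y : Fin (c * m) → Bool) (i : Fin m) :
    blockParity c m y i = decide (Odd #((block c m i).filter (y · = true))) := by
  simp [blockParity, block, filter_filter, blockOf, Fin.ext_iff]

theorem blockParity_congr {y y' : Fin (c * m) → Bool} {i : Fin m}
    (h : ∀ p ∈ block c m i, y p = y' p) : blockParity c m y i = blockParity c m y' i := by
  rw [blockParity_eq, blockParity_eq, filter_congr fun p hp => by rw [h p hp]]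

end Blocks

theorem countP_toList {α : Type*} (s : Finset α) (p : α → Bool) :
    s.toList.countP p = #(s.filter (p · = true)) := by
  have := Multiset.coe_countP (p := (p · = true)) s.toList
  simp only [Bool.decide_eq_true, coe_toList, Multiset.countP_eq_card_filter] at this
  exact this.symm

namespace DTree

variable {c m : ℕ} {β : Type}

noncomputable def blockExpand (c : ℕ) : DTree m β → DTree (c * m) β
  | .leaf b => .leaf b
  | .node i t0 t1 => parityTree (block c m i).toList (blockExpand c t0) (blockExpand c t1)

theorem eval_blockExpand (t : DTree m β) (y : Fin (c * m) → Bool) :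
    (t.blockExpand c).eval y = t.eval (blockParity c m y) := by
  induction t with
  | leaf => rfl
  | node i t0 t1 ih0 ih1 =>
    simp [blockExpand, eval_parityTree, countP_toList, eval, ih0, ih1, blockParity_eq]

theorem depth_blockExpand_le (hc : 0 < c) (t : DTree m β) : (t.blockExpand c).depth ≤ c * t.depth := by
  induction t with
  | leaf => simp [blockExpand, depth]
  | node i t0 t1 ih0 ih1 =>
    have := depth_parityTree_le (block c m i).toList (t0.blockExpand c) (t1.blockExpand c)
    rw [length_toList, card_block hc] at this
    have h0 := Nat.mul_le_mul_left c (le_max_left t0.depth t1.depth)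
    have h1 := Nat.mul_le_mul_left c (le_max_right t0.depth t1.depth)
    simp only [blockExpand, depth, Nat.mul_add, Nat.mul_one]
    omega

end DTree

section Histories

variable {n : ℕ}

def queried (h : List (Fin n × Bool)) : Finset (Fin n) := (h.map Prod.fst).toFinset

def answers (h : List (Fin n × Bool)) (p : Fin n) : Bool := decide ((p, true) ∈ h)

theorem mem_queried {h : List (Fin n × Bool)} {p : Fin n} : p ∈ queried h ↔ ∃ b, (p, b) ∈ h := by
  simp [queried]

theorem queried_append_singleton (h : List (Fin n × Bool)) (p : Fin n) (b : Bool) :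
    queried (h ++ [(p, b)]) = insert p (queried h) := by
  ext q
  simp [queried]

theorem answers_append_singleton (h : List (Fin n × Bool)) (p q : Fin n) (b : Bool) :
    answers (h ++ [(p, b)]) q = (answers h q || (decide (q = p) && b)) := by
  cases b <;> by_cases hq : q = p <;> simp [answers, hq]

theorem answers_eq_false_of_notMem {h : List (Fin n × Bool)} {p : Fin n} (hp : p ∉ queried h) :
    answers h p = false := by
  simpa [answers] using fun hmem => hp (mem_queried.2 ⟨true, hmem⟩)

theorem consistent_answers_append_singleton {h : List (Fin n × Bool)} {p : Fin n} {b : Bool}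
    (hh : Consistent (answers h) h) (hb : p ∈ queried h → b = answers h p) :
    Consistent (answers (h ++ [(p, b)])) (h ++ [(p, b)]) := by
  rintro ⟨q, b'⟩ hq
  have hpb : (answers h p || b) = b := by
    by_cases hp : p ∈ queried h
    · simp [hb hp]
    · simp [answers_eq_false_of_notMem hp]
  rw [answers_append_singleton]
  rcases List.mem_append.1 hq with hmem | hmem
  · by_cases hqp : q = p
    · subst hqp
      rw [← hh _ hmem, ← hb (mem_queried.2 ⟨b', hmem⟩)]
      simp
    · simp [hqp, hh _ hmem]
  · obtain ⟨rfl, rfl⟩ := Prod.mk.inj (List.mem_singleton.1 hmem)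
    simp only [decide_true, Bool.true_and]
    exact hpb

theorem filter_answers_append_singleton (s : Finset (Fin n)) (h : List (Fin n × Bool)) (p : Fin n)
    (b : Bool) :
    s.filter (answers (h ++ [(p, b)]) · = true) =
      if b ∧ p ∈ s then insert p (s.filter (answers h · = true))
      else s.filter (answers h · = true) := by
  ext q
  split_ifs with hb
  · by_cases hq : q = p <;> simp [answers_append_singleton, hq, hb]
  · by_cases hq : q = p
    · cases b <;> simp_all [answers_append_singleton]
    · simp [answers_append_singleton, hq]

end Histories

section BlockHistories

variable {c m : ℕ}

def blockCount (h : List (Fin (c * m) × Bool)) (i : Fin m) : ℕ :=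
  #((queried h).filter (blockOf · = i))

theorem filter_queried_subset_block (h : List (Fin (c * m) × Bool)) (i : Fin m) :
    (queried h).filter (blockOf · = i) ⊆ block c m i := fun p hp => by
  simpa using (mem_filter.1 hp).2

theorem blockCount_le (hc : 0 < c) (h : List (Fin (c * m) × Bool)) (i : Fin m) :
    blockCount h i ≤ c :=
  (card_le_card (filter_queried_subset_block h i)).trans_eq (card_block hc i)

theorem blockCount_lt_of_notMem (hc : 0 < c) {h : List (Fin (c * m) × Bool)} {p : Fin (c * m)}
    (hp : p ∉ queried h) : blockCount h (blockOf p) < c := by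
  refine (card_lt_card ⟨filter_queried_subset_block h _, fun hsub => ?_⟩).trans_eq (card_block hc _)
  exact hp (mem_filter.1 (hsub (mem_block.2 rfl))).1

theorem exists_mem_block_notMem_queried (hc : 0 < c) {h : List (Fin (c * m) × Bool)} {i : Fin m}
    (hi : blockCount h i < c) : ∃ u ∈ block c m i, u ∉ queried h := by
  by_contra! hall
  have hsub : block c m i ⊆ (queried h).filter (blockOf · = i) := fun u hu =>
    mem_filter.2 ⟨hall u hu, mem_block.1 hu⟩
  exact hi.not_ge ((card_block hc i).symm.trans_le (card_le_card hsub))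

theorem blockCount_append_singleton (h : List (Fin (c * m) × Bool)) (p : Fin (c * m)) (b : Bool)
    (i : Fin m) :
    blockCount (h ++ [(p, b)]) i = blockCount h i + if p ∉ queried h ∧ blockOf p = i then 1 else 0 := by
  rw [blockCount, blockCount, queried_append_singleton, filter_insert]
  by_cases hpi : blockOf p = i
  · rw [if_pos hpi]
    by_cases hp : p ∈ queried h
    · rw [insert_eq_of_mem (mem_filter.2 ⟨hp, hpi⟩)]
      simp [hp]
    · rw [card_insert_of_notMem fun hm => hp (mem_filter.1 hm).1]
      simp [hp, hpi]
  · simp [hpi]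

end BlockHistories

section InnerHistory

variable {c m : ℕ} (adv : List (Fin m × Bool) → Fin m → Bool)

def innerStep (s : List (Fin (c * m) × Bool) × List (Fin m × Bool)) (x : Fin (c * m) × Bool) :
    List (Fin (c * m) × Bool) × List (Fin m × Bool) :=
  (s.1 ++ [x],
    if x.1 ∉ queried s.1 ∧ blockCount s.1 (blockOf x.1) + 1 = c then
      s.2 ++ [(blockOf x.1, adv s.2 (blockOf x.1))]
    else s.2)

/-- The history of `adv` simulated along an outer history `h`: block `i` is queried, and answered
by `adv`, when the last unqueried bit of block `i` is queried in `h`. -/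
def innerHist (h : List (Fin (c * m) × Bool)) : List (Fin m × Bool) :=
  (h.foldl (innerStep adv) ([], [])).2

theorem fst_foldl_innerStep (h : List (Fin (c * m) × Bool))
    (s : List (Fin (c * m) × Bool) × List (Fin m × Bool)) :
    (h.foldl (innerStep adv) s).1 = s.1 ++ h := by
  induction h generalizing s with
  | nil => simp
  | cons x h ih => simp [ih, innerStep]

theorem innerHist_append_singleton (h : List (Fin (c * m) × Bool)) (p : Fin (c * m)) (b : Bool) :
    innerHist adv (h ++ [(p, b)]) =
      if p ∉ queried h ∧ blockCount h (blockOf p) + 1 = c then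
        innerHist adv h ++ [(blockOf p, adv (innerHist adv h) (blockOf p))]
      else innerHist adv h := by
  simp only [innerHist, List.foldl_append, List.foldl_cons, List.foldl_nil, innerStep,
    fst_foldl_innerStep, List.nil_append]

theorem isRun_innerHist (h : List (Fin (c * m) × Bool)) : IsRun adv (innerHist adv h) := by
  induction h using List.reverseRecOn with
  | nil => exact IsRun.nil
  | append_singleton h x ih =>
    rw [innerHist_append_singleton]
    split
    · exact ih.snoc _
    · exact ih

theorem mem_map_fst_innerHist_iff (hc : 0 < c) (h : List (Fin (c * m) × Bool)) (i : Fin m) :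
    i ∈ (innerHist adv h).map Prod.fst ↔ blockCount h i = c := by
  induction h using List.reverseRecOn generalizing i with
  | nil => simp [innerHist, blockCount, queried, hc.ne]
  | append_singleton h x ih =>
    obtain ⟨p, b⟩ := x
    rw [innerHist_append_singleton, blockCount_append_singleton]
    by_cases hp : p ∈ queried h
    · simp [hp, ih]
    have hlt := blockCount_lt_of_notMem hc hp
    by_cases hpi : blockOf p = i
    · subst hpi
      have := ih (blockOf p)
      split_ifs <;> simp_all
      omega
    · split_ifs <;> simp_all [Ne.symm hpi]

theorem nodup_map_fst_innerHist (hc : 0 < c) (h : List (Fin (c * m) × Bool)) :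
    ((innerHist adv h).map Prod.fst).Nodup := by
  induction h using List.reverseRecOn with
  | nil => simp [innerHist]
  | append_singleton h x ih =>
    rw [innerHist_append_singleton]
    split_ifs with hx
    · rw [List.map_append, List.nodup_append]
      refine ⟨ih, List.nodup_singleton _, ?_⟩
      rintro i hi _ hj rfl
      rw [List.map_singleton, List.mem_singleton] at hj
      rw [hj, mem_map_fst_innerHist_iff adv hc] at hi
      exact absurd hx.2 (by simp [hi])
    · exact ih

end InnerHistory

section BlockAdversary

variable {c m : ℕ} (adv : List (Fin m × Bool) → Fin m → Bool)

theorem mul_length_innerHist_le (hc : 0 < c) (h : List (Fin (c * m) × Bool)) :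
    c * (innerHist adv h).length ≤ h.length := by
  set S := ((innerHist adv h).map Prod.fst).toFinset
  have hS : #S = (innerHist adv h).length := by
    rw [List.toFinset_card_of_nodup (nodup_map_fst_innerHist adv hc h), List.length_map]
  calc c * (innerHist adv h).length = ∑ i ∈ S, blockCount h i := by
        rw [← hS, sum_const_nat fun i hi =>
          (mem_map_fst_innerHist_iff adv hc h i).1 (List.mem_toFinset.1 hi), mul_comm]
    _ = #((queried h).filter (blockOf · ∈ S)) := sum_card_fiberwise_eq_card_filter _ _ _
    _ ≤ #(queried h) := card_filter_le _ _
    _ ≤ h.length := (List.toFinset_card_le _).trans (List.length_map _).le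

def blockAdv (h : List (Fin (c * m) × Bool)) (p : Fin (c * m)) : Bool :=
  if p ∈ queried h then answers h p
  else if blockCount h (blockOf p) + 1 = c then adv (innerHist adv h) (blockOf p)
  else false

variable {adv}

theorem IsRun.consistent_answers {h : List (Fin (c * m) × Bool)} (hh : IsRun (blockAdv adv) h) :
    Consistent (answers h) h := by
  induction hh with
  | nil => simp [Consistent]
  | snoc p _ ih => exact consistent_answers_append_singleton ih fun hp => by simp [blockAdv, hp]

theorem IsRun.card_filter_answers (hc : 0 < c) {h : List (Fin (c * m) × Bool)}
    (hh : IsRun (blockAdv adv) h) (i : Fin m) :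
    #((block c m i).filter (answers h · = true)) = if (i, true) ∈ innerHist adv h then 1 else 0 := by
  induction hh generalizing i with
  | nil => simp [innerHist, answers]
  | @snoc h p _ ih =>
    rw [innerHist_append_singleton, filter_answers_append_singleton]
    by_cases hcomp : p ∉ queried h ∧ blockCount h (blockOf p) + 1 = c
    · have hb : blockAdv adv h p = adv (innerHist adv h) (blockOf p) := by
        simp [blockAdv, hcomp.1, hcomp.2]
      rw [if_pos hcomp, hb]
      by_cases hpi : blockOf p = i
      · subst hpi
        have hnew : (blockOf p, true) ∉ innerHist adv h := fun hmem => by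
          have := (mem_map_fst_innerHist_iff adv hc h _).1 (List.mem_map_of_mem (f := Prod.fst) hmem)
          simp only at this
          omega
        have hempty := ih (blockOf p)
        rw [if_neg hnew, card_eq_zero] at hempty
        cases adv (innerHist adv h) (blockOf p) <;> simp [hempty, hnew]
      · simp [hpi, Ne.symm hpi, ih]
    · have hb : blockAdv adv h p = true → p ∈ queried h ∧ answers h p = true := by
        unfold blockAdv
        split_ifs <;> simp_all
      rw [if_neg hcomp, ← ih i]
      split_ifs with hpb
      · rw [insert_eq_of_mem (mem_filter.2 ⟨hpb.2, (hb hpb.1).2⟩)]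
      · rfl

end BlockAdversary

section Security

variable {c m : ℕ}

theorem blockParity_update_of_filter_eq_empty {f : Fin (c * m) → Bool} {i : Fin m}
    {u : Fin (c * m)} (hu : u ∈ block c m i) (hf : (block c m i).filter (f · = true) = ∅)
    (b : Bool) : blockParity c m (Function.update f u b) i = b := by
  have hfilter : (block c m i).filter (Function.update f u b · = true) = if b then {u} else ∅ := by
    ext q
    by_cases hq : q = u
    · subst hq
      cases b <;> simp [hu]
    · have hq' : q ∉ (block c m i).filter (f · = true) := hf ▸ notMem_empty q
      cases b <;> simp_all
  rw [blockParity_eq, hfilter]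
  cases b <;> simp

theorem exists_blockParity_eq_of_eqOn_queried (hc : 0 < c) {h : List (Fin (c * m) × Bool)}
    {l : List (Fin m × Bool)} (hkeys : ∀ i, i ∈ l.map Prod.fst ↔ blockCount h i = c)
    (hodd : ∀ i, #((block c m i).filter (answers h · = true)) = if (i, true) ∈ l then 1 else 0)
    {y : Fin m → Bool} (hy : Consistent y l) (i : Fin m) :
    ∃ g : Fin (c * m) → Bool, (∀ p ∈ queried h, g p = answers h p) ∧ blockParity c m g i = y i := by
  by_cases hi : blockCount h i = c
  · refine ⟨answers h, fun _ _ => rfl, ?_⟩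
    obtain ⟨v, hv⟩ : ∃ v, (i, v) ∈ l := by simpa using (hkeys i).2 hi
    rw [blockParity_eq, hodd, hy _ hv]
    cases v
    · have : ((i, true) : Fin m × Bool) ∉ l := fun ht => by simpa [hy _ hv] using hy _ ht
      simp [this]
    · simp [hv]
  · obtain ⟨u, hu, huq⟩ :=
      exists_mem_block_notMem_queried hc (lt_of_le_of_ne (blockCount_le hc h i) hi)
    have hnone : ((i, true) : Fin m × Bool) ∉ l := fun ht =>
      hi ((hkeys i).1 (List.mem_map_of_mem (f := Prod.fst) ht))
    have hempty := hodd i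
    rw [if_neg hnone, card_eq_zero] at hempty
    refine ⟨Function.update (answers h) u (y i), fun p hp => ?_,
      blockParity_update_of_filter_eq_empty hu hempty _⟩
    exact Function.update_of_ne (by rintro rfl; exact huq hp) _ _

theorem exists_consistent_blockParity_eq (hc : 0 < c) {h : List (Fin (c * m) × Bool)}
    {l : List (Fin m × Bool)} (hcons : Consistent (answers h) h)
    (hkeys : ∀ i, i ∈ l.map Prod.fst ↔ blockCount h i = c)
    (hodd : ∀ i, #((block c m i).filter (answers h · = true)) = if (i, true) ∈ l then 1 else 0)
    {y : Fin m → Bool} (hy : Consistent y l) :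
    ∃ y' : Fin (c * m) → Bool, Consistent y' h ∧ blockParity c m y' = y := by
  choose g hgq hgpar using exists_blockParity_eq_of_eqOn_queried hc hkeys hodd hy
  refine ⟨fun p => g (blockOf p) p, fun ⟨p, b⟩ hpb => ?_, funext fun i => ?_⟩
  · rw [← hcons _ hpb]
    exact hgq _ p (mem_queried.2 ⟨b, hpb⟩)
  · rw [← hgpar i]
    exact blockParity_congr fun p hp => by rw [mem_block.1 hp]

theorem HasSecurity.comp_blockParity {M q : ℕ} {B : (Fin m → Bool) → Option (Fin M)} {β : ℝ}
    (hc : 0 < c) (hB : HasSecurity B (q / c) β) :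
    HasSecurity (fun y : Fin (c * m) → Bool => B (blockParity c m y)) q β := by
  obtain ⟨adv, hadv⟩ := hB
  refine ⟨blockAdv adv, fun t ht => ?_⟩
  set h := runAdv (blockAdv adv) t []
  have hrun : IsRun (blockAdv adv) h := (IsRun.nil : IsRun (blockAdv adv) []).runAdv t
  have hlen : (innerHist adv h).length ≤ q / c := by
    rw [Nat.le_div_iff_mul_le hc, mul_comm]
    calc c * (innerHist adv h).length ≤ h.length := mul_length_innerHist_le adv hc h
      _ ≤ t.depth := by simpa using length_runAdv_le (blockAdv adv) t []
      _ ≤ q := ht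
  obtain ⟨H, hcard, hH⟩ := hadv (DTree.pathTree ((innerHist adv h).map Prod.fst))
    (by rwa [DTree.depth_pathTree, List.length_map])
  refine ⟨H, hcard, fun k hk => ?_⟩
  obtain ⟨y, hy, hBy⟩ := hH k hk
  rw [(isRun_innerHist adv h).runAdv_pathTree] at hy
  obtain ⟨y', hy', hpar⟩ := exists_consistent_blockParity_eq hc hrun.consistent_answers
    (mem_map_fst_innerHist_iff adv hc h) (hrun.card_filter_answers hc) hy
  exact ⟨y', hy', (congrArg B hpar).trans hBy⟩

end Security

theorem mbf_block_composition_general {m M T : ℕ} (δ : ℝ)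
    (B : (Fin m → Bool) → Option (Fin M)) (hB : IsMBF B T δ)
    (c : ℕ) (hc : 1 ≤ c) :
    IsMBF (fun y : Fin (c * m) → Bool => B (blockParity c m y)) (c * T) δ := by
  obtain ⟨⟨tr, htr, htr_eval⟩, hdec, hsec⟩ := hB
  refine ⟨⟨tr.blockExpand c, (tr.depth_blockExpand_le hc).trans (Nat.mul_le_mul_left c htr),
    fun y => by rw [DTree.eval_blockExpand, htr_eval]⟩, fun k => ?_, ?_⟩
  · obtain ⟨tk, htk, htk_eval⟩ := hdec k
    refine ⟨tk.blockExpand c, ?_, fun y => by rw [DTree.eval_blockExpand, htk_eval]⟩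
    calc ((tk.blockExpand c).depth : ℝ) ≤ c * tk.depth := by
          exact_mod_cast tk.depth_blockExpand_le hc
      _ ≤ c * (δ * T) := by gcongr
      _ = δ * ↑(c * T) := by push_cast; ring
  · have hfloor : ⌊(1 - δ) * ↑(c * T)⌋₊ / c = ⌊(1 - δ) * T⌋₊ := by
      rw [← Nat.floor_div_natCast]
      congr 1
      push_cast
      field_simp
    exact HasSecurity.comp_blockParity hc (hfloor ▸ hsec)

/-- If `B` is a `(T, δ)`-mystery bin function on `{0,1}^m` with keyspace
`[M]`, then the bin function on `{0,1}^{cm}` obtained by replacing each input bit by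
the parity of a block of `c` bits is a `(cT, δ)`-mystery bin function with the same
keyspace. -/
theorem mbf_block_composition {m M T : ℕ} (hT : 0 < T) (δ : ℝ)
    (hδ0 : 0 < δ) (hδ1 : δ < 1)
    (B : (Fin m → Bool) → Option (Fin M)) (hB : IsMBF B T δ)
    (c : ℕ) (hc : 1 ≤ c) :
    IsMBF (fun y : Fin (c * m) → Bool => B (blockParity c m y)) (c * T) δ :=
  mbf_block_composition_general δ B hB c hc
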